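/- Let G be a graph with normal spanning tree T and compatible numbering, and let T[a, b] be a leftmost path with a < b. Then T[a, b] is stable if and only if witn(v) ≥ a for every internal vertex v of T(a, b). -/

import Mathlib

open SimpleGraph

variable {V : Type*}

/-- `u` lies on every path (hence the unique path) from root `r` to `v` in tree `T`:
`u` is an ancestor of `v`. -/
def Anc (T : SimpleGraph V) (r u v : V) : Prop :=
  ∀ p : T.Walk r v, p.IsPath → u ∈ p.support

/-- proper ancestor -/
def PAnc (T : SimpleGraph V) (r u v : V) : Prop :=
  Anc T r u v ∧ u ≠ v

/-- `T` is a normal spanning tree of `G` rooted at `r`. -/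
def IsNormalSpanningTree (G T : SimpleGraph V) (r : V) : Prop :=
  T.IsTree ∧ T ≤ G ∧ ∀ u v : V, G.Adj u v → Anc T r u v ∨ Anc T r v u

/-- `w` is a child of `v` in the rooted tree `(T, r)`. -/
def IsChild (T : SimpleGraph V) (r v w : V) : Prop :=
  T.Adj v w ∧ Anc T r v w

/-- the set of descendants of `v` (including `v`). -/
def Desc (T : SimpleGraph V) (r v : V) : Set V := {u | Anc T r v u}

/-- `L(v)`: proper ancestors of `v` adjacent in `G` to some descendant of `v`. -/
def Lset (G T : SimpleGraph V) (r v : V) : Set V :=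
  {u | PAnc T r u v ∧ ∃ w, Anc T r v w ∧ G.Adj u w}

/-- `x` is the `k`-th lowpoint of `v`: the `k`-th lowest element of `L(v)`,
or `v` itself if `|L(v)| < k`. -/
def IsKthLowpoint (G T : SimpleGraph V) (r : V) (k : ℕ) (v x : V) : Prop :=
  (x ∈ Lset G T r v ∧ {u ∈ Lset G T r v | PAnc T r u x}.ncard = k - 1) ∨
  ((Lset G T r v).ncard < k ∧ x = v)

/-- `x` is the highpoint of `v`: the highest element of `L(v) \ {parent v}`,
or `v` itself if that set is empty. -/
def IsHighpoint (G T : SimpleGraph V) (r : V) (v x : V) : Prop :=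
  (x ∈ Lset G T r v ∧ ¬ IsChild T r x v ∧
    ∀ u ∈ Lset G T r v, ¬ IsChild T r u v → Anc T r u x) ∨
  ((∀ u ∈ Lset G T r v, IsChild T r u v) ∧ x = v)

/-- a numbering of the vertices by `1, …, n`. -/
def IsNumbering [Fintype V] (num : V → ℕ) : Prop :=
  Function.Injective num ∧ ∀ v, num v ∈ Set.Icc 1 (Fintype.card V)

/-- The numbering `num` is compatible with the normal spanning tree `(T, r)`,
where `lwpt1 v` and `lwpt2 v` are the first and second lowpoints of `v`. -/
def CompatibleNumbering [Fintype V] (G T : SimpleGraph V) (r : V)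
    (num : V → ℕ) (lwpt1 lwpt2 : V → V) : Prop :=
  IsNumbering num ∧
  (∀ v : V, num '' Desc T r v = Set.Icc (num v) (num v + (Desc T r v).ncard - 1)) ∧
  (∀ v, IsKthLowpoint G T r 1 v (lwpt1 v)) ∧
  (∀ v, IsKthLowpoint G T r 2 v (lwpt2 v)) ∧
  (∀ p j k : V, IsChild T r p j → IsChild T r p k → num j < num k →
    num (lwpt1 k) < num (lwpt1 j) ∨
      (lwpt1 j = lwpt1 k ∧ num (lwpt2 j) ≤ num (lwpt2 k)))

/-- `w` is the left child of `v`: its largest-numbered child. -/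
def IsLeftChild (T : SimpleGraph V) (r : V) (num : V → ℕ) (v w : V) : Prop :=
  IsChild T r v w ∧ ∀ u, IsChild T r v u → num u ≤ num w

/-- `w` is a leftmost descendant of `v`. -/
def LeftmostDesc (T : SimpleGraph V) (r : V) (num : V → ℕ) (v w : V) : Prop :=
  Relation.ReflTransGen (IsLeftChild T r num) v w

/-- `T[a,b]` is a leftmost path: `b` is a leftmost descendant of some child of `a`. -/
def IsLeftmostPath (T : SimpleGraph V) (r : V) (num : V → ℕ) (a b : V) : Prop :=
  ∃ a', IsChild T r a a' ∧ LeftmostDesc T r num a' b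

/-- a back-edge `(x, y)` with `x` a descendant of `y`. -/
def IsBackEdge (G T : SimpleGraph V) (r : V) (x y : V) : Prop :=
  G.Adj x y ∧ ¬ T.Adj x y ∧ PAnc T r y x

/-- `T[a,b]` is stable. -/
def Stable (G T : SimpleGraph V) (r : V) (num : V → ℕ) (a b : V) : Prop :=
  ∃ a', IsChild T r a a' ∧ LeftmostDesc T r num a' b ∧
    ∀ x y, IsBackEdge G T r x y → num a' ≤ num x → num x < num b → num a ≤ num y

/-- `(A, B)` is a separation of `G`. -/
def IsSeparation (G : SimpleGraph V) (A B : Set V) : Prop :=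
  A ∪ B = Set.univ ∧ (A \ B).Nonempty ∧ (B \ A).Nonempty ∧
    ∀ u ∈ A \ B, ∀ v ∈ B \ A, ¬ G.Adj u v

/-- a 2-separation. -/
def IsSeparation2 (G : SimpleGraph V) (A B : Set V) : Prop :=
  IsSeparation G A B ∧ (A ∩ B).ncard = 2

/-- two separations are nested (up to swapping sides). -/
def Nested (A B C D : Set V) : Prop :=
  (A ⊆ C ∧ D ⊆ B) ∨ (A ⊆ D ∧ C ⊆ B) ∨ (B ⊆ C ∧ D ⊆ A) ∨ (B ⊆ D ∧ C ⊆ A)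

/-- a totally-nested 2-separation. -/
def TotallyNested2 (G : SimpleGraph V) (A B : Set V) : Prop :=
  IsSeparation2 G A B ∧ ∀ C D : Set V, IsSeparation2 G C D → Nested A B C D

/-- a half-connected separation. -/
def HalfConnected (G : SimpleGraph V) (A B : Set V) : Prop :=
  (G.induce (A \ B)).Connected ∨ (G.induce (B \ A)).Connected

/-- the open tree path `T(a,b)`. -/
def Topen (T : SimpleGraph V) (r a b : V) : Set V :=
  {u | PAnc T r a u ∧ PAnc T r u b}

/-- type-2 separations. -/
def IsType2Sep (G T : SimpleGraph V) (r : V) (A B : Set V) : Prop :=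
  IsSeparation2 G A B ∧ ∃ a b : V, A ∩ B = {a, b} ∧ r ≠ a ∧ r ≠ b ∧
    (Topen T r a b).Nonempty ∧
    ((r ∈ A \ B ∧ Topen T r a b ⊆ B \ A) ∨ (r ∈ B \ A ∧ Topen T r a b ⊆ A \ B))

/-- type-1 separations. -/
def IsType1Sep (G T : SimpleGraph V) (r : V) (A B : Set V) : Prop :=
  IsSeparation2 G A B ∧ ¬ IsType2Sep G T r A B

/-- 2-connectivity: more than two vertices and no cutvertex. -/
def TwoConnected [Fintype V] (G : SimpleGraph V) : Prop :=
  2 < Fintype.card V ∧ ∀ v : V, (G.induce {u | u ≠ v}).Connected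

/-- `(A,B)` separates `u` and `v`. -/
def SepSeparates (A B : Set V) (u v : V) : Prop :=
  (u ∈ A \ B ∧ v ∈ B \ A) ∨ (u ∈ B \ A ∧ v ∈ A \ B)

/-- minimal separation: each separator vertex has neighbours on both proper sides. -/
def IsMinimalSep (G : SimpleGraph V) (A B : Set V) : Prop :=
  IsSeparation G A B ∧ ∀ v ∈ A ∩ B,
    (∃ u ∈ A \ B, G.Adj v u) ∧ (∃ u ∈ B \ A, G.Adj v u)

/-- `m` is the number of the smallest-numbered neighbour of `v`. -/
def IsNmin (G : SimpleGraph V) (num : V → ℕ) (v : V) (m : ℕ) : Prop :=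
  (∃ u, G.Adj v u ∧ num u = m) ∧ ∀ u, G.Adj v u → m ≤ num u

/-- `w` is the second-largest child of `v`. -/
def IsSecondLargestChild (T : SimpleGraph V) (r : V) (num : V → ℕ) (v w : V) : Prop :=
  IsChild T r v w ∧ ({u | IsChild T r v u ∧ num w < num u}).ncard = 1

/-- `m = witn(v)`. -/
def IsWitn (G T : SimpleGraph V) (r : V) (num : V → ℕ) (lwpt1 : V → V)
    (v : V) (m : ℕ) : Prop :=
  (∃ w, IsSecondLargestChild T r num v w ∧
    ∃ nm, IsNmin G num v nm ∧ m = min nm (num (lwpt1 w))) ∨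
  ((¬ ∃ w, IsSecondLargestChild T r num v w) ∧ IsNmin G num v m)

/-- `S` is an interval of `X` with respect to the numbering. -/
def IsIntervalIn (num : V → ℕ) (X S : Set V) : Prop :=
  S ⊆ X ∧ ∀ x ∈ S, ∀ z ∈ S, ∀ y ∈ X, num x ≤ num y → num y ≤ num z → y ∈ S

/-- `S` is a cyclic interval of `X`. -/
def IsCyclicIntervalIn (num : V → ℕ) (X S : Set V) : Prop :=
  IsIntervalIn num X S ∨ IsIntervalIn num X (X \ S)

section Base
variable {T : SimpleGraph V} {r : V}

lemma path_unique (hT : T.IsTree) {u v : V} {p q : T.Walk u v}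
    (hp : p.IsPath) (hq : q.IsPath) : p = q := by
  obtain ⟨-, h⟩ := isTree_iff_existsUnique_path.mp hT
  obtain ⟨w, -, hw⟩ := h u v
  rw [hw p hp, hw q hq]

lemma exists_path (hT : T.IsTree) (u v : V) : ∃ p : T.Walk u v, p.IsPath := by
  obtain ⟨-, h⟩ := isTree_iff_existsUnique_path.mp hT
  obtain ⟨w, hw, -⟩ := h u v
  exact ⟨w, hw⟩

lemma anc_of_mem (hT : T.IsTree) {u v : V} {p : T.Walk r v} (hp : p.IsPath)
    (h : u ∈ p.support) : Anc T r u v := fun q hq => by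
  rw [path_unique hT hq hp]; exact h

lemma anc_refl (v : V) : Anc T r v v := fun p _ => p.end_mem_support

lemma anc_root (v : V) : Anc T r r v := fun p _ => p.start_mem_support

lemma anc_trans (hT : T.IsTree) {u v w : V} (huv : Anc T r u v) (hvw : Anc T r v w) :
    Anc T r u w := by
  classical
  intro p hp
  have hv := hvw p hp
  have := huv (p.takeUntil v hv) (hp.takeUntil hv)
  exact p.support_takeUntil_subset hv this

lemma anc_antisymm (hT : T.IsTree) {u v : V} (huv : Anc T r u v) (hvu : Anc T r v u) :
    u = v := by
  classical
  obtain ⟨p, hp⟩ := exists_path hT r v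
  have hu := huv p hp
  have hq : (p.takeUntil u hu).IsPath := hp.takeUntil hu
  have hv : v ∈ (p.takeUntil u hu).support := hvu _ hq
  have hspec := p.take_spec hu
  by_contra hne
  have hnd := hp.support_nodup
  rw [← hspec, Walk.support_append, List.nodup_append] at hnd
  refine hnd.2.2 v hv v ?_ rfl
  have hend : v ∈ (p.dropUntil u hu).support := Walk.end_mem_support _
  have : (p.dropUntil u hu).support = u :: (p.dropUntil u hu).support.tail :=
    Walk.support_eq_cons _
  rw [this] at hend
  rw [List.mem_cons] at hend
  rcases hend with h | h
  · exact absurd h.symm hne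
  · exact h

lemma anc_total (hT : T.IsTree) {u v z : V} (hu : Anc T r u z) (hv : Anc T r v z) :
    Anc T r u v ∨ Anc T r v u := by
  classical
  obtain ⟨p, hp⟩ := exists_path hT r z
  have hvp := hv p hp
  have hup := hu p hp
  rw [← p.take_spec hvp, Walk.mem_support_append_iff] at hup
  rcases hup with h | h
  · exact Or.inl (anc_of_mem hT (hp.takeUntil hvp) h)
  · right
    set q := p.dropUntil v hvp with hq
    have hw : p = ((p.takeUntil v hvp).append (q.takeUntil u h)).append (q.dropUntil u h) := by
      rw [← Walk.append_assoc, q.take_spec h, p.take_spec hvp]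
    have hwp : (((p.takeUntil v hvp).append (q.takeUntil u h))).IsPath := by
      rw [hw] at hp; exact hp.of_append_left
    have hvm : v ∈ ((p.takeUntil v hvp).append (q.takeUntil u h)).support := by
      rw [Walk.mem_support_append_iff]
      exact Or.inl (Walk.end_mem_support _)
    exact anc_of_mem hT hwp hvm

/-- any ancestor of `w` other than `w` itself is an ancestor of its parent `v`. -/
lemma anc_parent (hT : T.IsTree) {v w x : V} (hadj : T.Adj v w) (hvw : Anc T r v w)
    (hx : Anc T r x w) (hne : x ≠ w) : Anc T r x v := by
  classical
  obtain ⟨p, hp⟩ := exists_path hT r w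
  have hvp := hvw p hp
  have he : (Walk.cons hadj Walk.nil : T.Walk v w).IsPath := by
    rw [Walk.cons_isPath_iff]; exact ⟨Walk.IsPath.nil, by simp [hadj.ne]⟩
  have hd : p.dropUntil v hvp = Walk.cons hadj Walk.nil :=
    path_unique hT (hp.dropUntil hvp) he
  have hxp := hx p hp
  rw [← p.take_spec hvp, hd, Walk.mem_support_append_iff] at hxp
  rcases hxp with h | h
  · exact anc_of_mem hT (hp.takeUntil hvp) h
  · simp at h
    rcases h with h | h
    · subst h
      exact anc_of_mem hT (hp.takeUntil hvp) (Walk.end_mem_support _)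
    · exact absurd h hne

/-- a proper ancestor has a child which is still an ancestor. -/
lemma exists_child_anc (hT : T.IsTree) {v x : V} (hvx : Anc T r v x) (hne : v ≠ x) :
    ∃ w, T.Adj v w ∧ Anc T r v w ∧ Anc T r w x := by
  classical
  obtain ⟨p, hp⟩ := exists_path hT r x
  have hvp := hvx p hp
  have hd : (p.dropUntil v hvp).IsPath := hp.dropUntil hvp
  cases hq : p.dropUntil v hvp with
  | nil => exact absurd rfl hne
  | cons hadj q' =>
    rename_i w
    refine ⟨w, hadj, ?_, ?_⟩
    · have hw : p = ((p.takeUntil v hvp).append (Walk.cons hadj Walk.nil)).append q' := by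
        rw [← Walk.append_assoc]
        have h2 : (Walk.cons hadj (Walk.nil : T.Walk w w)).append q' = Walk.cons hadj q' := by
          simp
        rw [h2, ← hq, p.take_spec hvp]
      have hwp : ((p.takeUntil v hvp).append (Walk.cons hadj Walk.nil)).IsPath := by
        rw [hw] at hp; exact hp.of_append_left
      have hvm : v ∈ ((p.takeUntil v hvp).append (Walk.cons hadj Walk.nil)).support := by
        rw [Walk.mem_support_append_iff]
        exact Or.inl (Walk.end_mem_support _)
      exact anc_of_mem hT hwp hvm
    · refine anc_of_mem hT hp ?_
      have hm : w ∈ (p.dropUntil v hvp).support := by rw [hq]; simp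
      exact p.support_dropUntil_subset hvp hm

section Layer2
variable {G T : SimpleGraph V} {r : V} {num : V → ℕ}

lemma anc_num_le (hdesc : ∀ v : V, num '' Desc T r v =
    Set.Icc (num v) (num v + (Desc T r v).ncard - 1)) {u v : V} (h : Anc T r u v) :
    num u ≤ num v := by
  have hm : num v ∈ num '' Desc T r u := ⟨v, h, rfl⟩
  rw [hdesc u] at hm
  exact hm.1

lemma panc_num_lt (hinj : Function.Injective num)
    (hdesc : ∀ v : V, num '' Desc T r v = Set.Icc (num v) (num v + (Desc T r v).ncard - 1))
    {u v : V} (h : Anc T r u v) (hne : u ≠ v) : num u < num v :=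
  lt_of_le_of_ne (anc_num_le hdesc h) (fun he => hne (hinj he))

lemma anc_of_num_between (hinj : Function.Injective num)
    (hdesc : ∀ v : V, num '' Desc T r v = Set.Icc (num v) (num v + (Desc T r v).ncard - 1))
    {u x z : V} (hz : Anc T r u z) (h1 : num u ≤ num x) (h2 : num x ≤ num z) :
    Anc T r u x := by
  have hz' : num z ∈ Set.Icc (num u) (num u + (Desc T r u).ncard - 1) := by
    rw [← hdesc u]; exact ⟨z, hz, rfl⟩
  have hx : num x ∈ num '' Desc T r u := by
    rw [hdesc u]; exact ⟨h1, le_trans h2 hz'.2⟩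
  obtain ⟨y, hy, he⟩ := hx
  rwa [hinj he] at hy

/-- if `w, c` are distinct children of `v` with `num w < num c`, descendants of `w`
have number `< num c`. -/
lemma desc_lt_sibling (hT : T.IsTree) (hinj : Function.Injective num)
    (hdesc : ∀ v : V, num '' Desc T r v = Set.Icc (num v) (num v + (Desc T r v).ncard - 1))
    {v w c x : V} (hw : IsChild T r v w) (hc : IsChild T r v c)
    (hwc : num w < num c) (hwx : Anc T r w x) : num x < num c := by
  by_contra hcx
  push_neg at hcx
  have hanc : Anc T r w c := anc_of_num_between hinj hdesc hwx hwc.le hcx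
  have hne : w ≠ c := fun he => absurd (he ▸ rfl) hwc.ne
  have : Anc T r w v := anc_parent hT hc.1 hc.2 hanc hne
  exact hw.1.ne (anc_antisymm hT hw.2 this)

lemma lwpt1_min [Finite V] (hT : T.IsTree)
    (hdesc : ∀ v : V, num '' Desc T r v = Set.Icc (num v) (num v + (Desc T r v).ncard - 1))
    {w l : V} (h1 : IsKthLowpoint G T r 1 w l) {y : V} (hy : y ∈ Lset G T r w) :
    num l ≤ num y := by
  rcases h1 with ⟨hmem, hcard⟩ | ⟨hlt, -⟩
  · have hempty : {u ∈ Lset G T r w | PAnc T r u l} = ∅ := by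
      rw [← Set.ncard_eq_zero (Set.toFinite _)]
      simpa using hcard
    rcases anc_total hT hy.1.1 hmem.1.1 with h | h
    · by_cases hyl : y = l
      · exact le_of_eq (by rw [hyl])
      · have : y ∈ {u ∈ Lset G T r w | PAnc T r u l} := ⟨hy, h, hyl⟩
        rw [hempty] at this
        exact absurd this (Set.notMem_empty y)
    · exact anc_num_le hdesc h
  · have he : Lset G T r w = ∅ := by
      rw [← Set.ncard_eq_zero (Set.toFinite _)]; omega
    rw [he] at hy
    exact absurd hy (Set.notMem_empty y)

end Layer2

section Layer3
variable {G T : SimpleGraph V} {r : V} {num : V → ℕ}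

lemma second_child_prop [Finite V] (hinj : Function.Injective num) {v c w2 : V}
    (hc : IsChild T r v c) (hmax : ∀ u, IsChild T r v u → num u ≤ num c)
    (hw2 : IsSecondLargestChild T r num v w2) :
    w2 ≠ c ∧ ∀ w, IsChild T r v w → w ≠ c → num w ≤ num w2 := by
  obtain ⟨hw2c, hcard⟩ := hw2
  have hne : w2 ≠ c := by
    rintro rfl
    have : {u | IsChild T r v u ∧ num w2 < num u} = ∅ := by
      ext u
      simp only [Set.mem_setOf_eq, Set.mem_empty_iff_false, iff_false, not_and, not_lt]
      exact fun hu => hmax u hu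
    rw [this] at hcard
    simp at hcard
  have hlt : num w2 < num c :=
    lt_of_le_of_ne (hmax w2 hw2c) (fun he => hne (hinj he))
  obtain ⟨z, hz⟩ := Set.ncard_eq_one.mp hcard
  have hcz : c = z := by
    have : c ∈ {u | IsChild T r v u ∧ num w2 < num u} := ⟨hc, hlt⟩
    rwa [hz, Set.mem_singleton_iff] at this
  refine ⟨hne, fun w hw hwc => ?_⟩
  by_contra hlt'
  push_neg at hlt'
  have : w ∈ {u | IsChild T r v u ∧ num w2 < num u} := ⟨hw, hlt'⟩
  rw [hz, Set.mem_singleton_iff] at this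
  exact hwc (this.trans hcz.symm)

lemma exists_second_child [Finite V] (hinj : Function.Injective num) {v c w : V}
    (hc : IsChild T r v c) (hmax : ∀ u, IsChild T r v u → num u ≤ num c)
    (hw : IsChild T r v w) (hne : w ≠ c) :
    ∃ w2, IsSecondLargestChild T r num v w2 := by
  have hfin : ({u | IsChild T r v u ∧ u ≠ c}).Finite := Set.toFinite _
  obtain ⟨w2, hw2, hmax2⟩ := Set.exists_max_image _ num hfin ⟨w, hw, hne⟩
  refine ⟨w2, hw2.1, ?_⟩
  have : {u | IsChild T r v u ∧ num w2 < num u} = {c} := by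
    ext u
    simp only [Set.mem_setOf_eq, Set.mem_singleton_iff]
    constructor
    · rintro ⟨hu, hlt⟩
      by_contra huc
      exact absurd (hmax2 u ⟨hu, huc⟩) (not_le.mpr hlt)
    · rintro rfl
      exact ⟨hc, lt_of_le_of_ne (hmax w2 hw2.1) (fun he => hw2.2 (hinj he))⟩
  rw [this, Set.ncard_singleton]

lemma leftmostDesc_anc (hT : T.IsTree) {u b : V} (h : LeftmostDesc T r num u b) :
    Anc T r u b := by
  induction h with
  | refl => exact anc_refl u
  | tail _ hstep ih => exact anc_trans hT ih hstep.1.2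

lemma leftmost_step (hT : T.IsTree) {u b v : V} (h : LeftmostDesc T r num u b)
    (huv : Anc T r u v) (hvb : Anc T r v b) (hne : v ≠ b) :
    ∃ c, IsLeftChild T r num v c ∧ LeftmostDesc T r num c b := by
  induction h using Relation.ReflTransGen.head_induction_on with
  | refl => exact absurd (anc_antisymm hT hvb huv) hne
  | head hstep hrest ih =>
    rename_i u' c0 
    by_cases hvu : v = u'
    · exact hvu ▸ ⟨c0, hstep, hrest⟩
    · rcases anc_total hT (leftmostDesc_anc hT hrest) hvb with h | h
      · exact ih h
      · by_cases hvc : v = c0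
        · exact ih (hvc ▸ anc_refl v)
        · have : Anc T r v u' := anc_parent hT hstep.1.1 hstep.1.2 h hvc
          exact absurd (anc_antisymm hT this huv) hvu

end Layer3

section Core
variable {G T : SimpleGraph V} {r : V} {num : V → ℕ}

lemma back_edge_bound [Finite V] {lwpt1 : V → V} {witn : V → ℕ}
    (hT : T.IsTree)
    (hinj : Function.Injective num)
    (hdesc : ∀ v : V, num '' Desc T r v = Set.Icc (num v) (num v + (Desc T r v).ncard - 1))
    (hlow1 : ∀ v, IsKthLowpoint G T r 1 v (lwpt1 v))
    (hsib : ∀ p j k : V, IsChild T r p j → IsChild T r p k → num j < num k →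
      num (lwpt1 k) < num (lwpt1 j) ∨ (lwpt1 j = lwpt1 k ∧ True))
    (hwitn : ∀ v, IsWitn G T r num lwpt1 v (witn v))
    {a a' b : V} (ha' : IsChild T r a a')
    (hW : ∀ v ∈ Topen T r a b, num a ≤ witn v)
    {u : V} (hu : LeftmostDesc T r num u b) (hau : Anc T r a' u) :
    ∀ x y, IsBackEdge G T r x y → Anc T r u x → num x < num b → num a ≤ num y := by
  induction hu using Relation.ReflTransGen.head_induction_on with
  | refl =>
    intro x y _ hbx hxb
    exact absurd (anc_num_le hdesc hbx) (not_le.mpr hxb)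
  | @head u c hstep hrest ih =>
    intro x y hbe hux hxb
    -- u is a proper vertex of the path, in `Topen a b` 
    have hub : u ≠ b := by
      rintro rfl
      exact hstep.1.1.ne (anc_antisymm hT hstep.1.2 (leftmostDesc_anc hT hrest))
    have hane : a ≠ u := by
      rintro rfl
      exact ha'.1.ne (anc_antisymm hT ha'.2 hau)
    have hTop : u ∈ Topen T r a b :=
      ⟨⟨anc_trans hT ha'.2 hau, hane⟩,
       ⟨anc_trans hT hstep.1.2 (leftmostDesc_anc hT hrest), hub⟩⟩
    have hWu : num a ≤ witn u := hW u hTop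
    obtain ⟨hGxy, hTxy, hyx, hyne⟩ := hbe
    by_cases hxu : x = u
    · -- back-edge from u itself: use N_min
      subst hxu
      rcases hwitn x with ⟨w2, hw2, nm, hnm, heq⟩ | ⟨-, hnm⟩
      · calc num a ≤ witn x := hWu
          _ ≤ nm := by rw [heq]; exact min_le_left _ _
          _ ≤ num y := hnm.2 y hGxy
      · exact le_trans hWu (hnm.2 y hGxy)
    · -- x is a proper descendant of u; find the child w of u above x
      obtain ⟨w, hadjw, huw, hwx⟩ := exists_child_anc hT hux (Ne.symm hxu)
      by_cases hwc : w = c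
      · exact ih (anc_trans hT hau (hwc ▸ huw)) x y ⟨hGxy, hTxy, hyx, hyne⟩ (hwc ▸ hwx) hxb
      · -- w is a non-left child of u
        have hnumaw : num a ≤ num w :=
          le_trans (anc_num_le hdesc (anc_trans hT ha'.2 hau)) (anc_num_le hdesc huw)
        rcases anc_total hT hyx (hwx) with hyw | hwy
        · -- y is an ancestor of x below (or equal to) w, or a proper ancestor of w
          by_cases hyw' : y = w
          · exact hyw' ▸ hnumaw
          · -- y proper ancestor of w : y ∈ L(w)
            have hyL : y ∈ Lset G T r w := ⟨⟨hyw, hyw'⟩, x, hwx, hGxy.symm⟩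
            have h1 : num (lwpt1 w) ≤ num y := lwpt1_min hT hdesc (hlow1 w) hyL
            -- compare with second largest child w2 of u
            rcases hwitn u with ⟨w2, hw2, nm, hnm, heq⟩ | ⟨hnex, -⟩
            · obtain ⟨hw2ne, hw2max⟩ := second_child_prop hinj hstep.1 hstep.2 hw2
              have hww2 : num w ≤ num w2 := hw2max w ⟨hadjw, huw⟩ hwc
              have h2 : num (lwpt1 w2) ≤ num (lwpt1 w) := by
                by_cases hww2' : w = w2
                · rw [hww2']
                · rcases hsib u w w2 ⟨hadjw, huw⟩ hw2.1
                    (lt_of_le_of_ne hww2 (fun he => hww2' (hinj he))) with h | h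
                  · exact h.le
                  · rw [h.1]
              calc num a ≤ witn u := hWu
                _ ≤ num (lwpt1 w2) := by rw [heq]; exact min_le_right _ _
                _ ≤ num (lwpt1 w) := h2
                _ ≤ num y := h1
            · exact absurd (exists_second_child hinj hstep.1 hstep.2 ⟨hadjw, huw⟩ hwc) hnex
        · -- y is a descendant of w
          exact le_trans hnumaw (anc_num_le hdesc hwy)

end Core

/-- Witness characterization of stability: a leftmost path `T[a,b]` with `a < b` is
stable iff `witn v ≥ a` for every internal vertex `v` of `T(a,b)`. -/
theorem witn_stable [Fintype V] (G T : SimpleGraph V) (r : V) (num : V → ℕ)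
    (lwpt1 lwpt2 : V → V) (witn : V → ℕ)
    (hT : IsNormalSpanningTree G T r)
    (hnum : CompatibleNumbering G T r num lwpt1 lwpt2)
    (hwitn : ∀ v, IsWitn G T r num lwpt1 v (witn v))
    (a b : V) (hab : num a < num b) (hpath : IsLeftmostPath T r num a b) :
    Stable G T r num a b ↔ ∀ v ∈ Topen T r a b, num a ≤ witn v := by
  obtain ⟨hTree, hle, hnorm⟩ := hT
  obtain ⟨⟨hinj, -⟩, hdesc, hlow1, hlow2, hsib⟩ := hnum
  constructor
  · -- Stable → witness condition
    rintro ⟨a', ha', hld, hbp⟩ v ⟨⟨hav, hane⟩, hvb, hvne⟩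
    -- v lies on the path from a' to b
    have hA : Anc T r a' v := by
      rcases anc_total hTree (leftmostDesc_anc hTree hld) hvb with h | h
      · exact h
      · by_cases hva : v = a'
        · exact hva ▸ anc_refl v
        · have : Anc T r v a := anc_parent hTree ha'.1 ha'.2 h hva
          exact absurd (anc_antisymm hTree hav this) hane
    have hnav : num a < num v := panc_num_lt hinj hdesc hav hane
    have hnvb : num v < num b := panc_num_lt hinj hdesc hvb hvne
    -- every neighbour of v has number ≥ num a
    have hnbr : ∀ u0, G.Adj v u0 → num a ≤ num u0 := by
      intro u0 hadj0
      rcases hnorm v u0 hadj0 with h | h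
      · exact le_trans hnav.le (anc_num_le hdesc h)
      · by_cases hTadj : T.Adj v u0
        · exact anc_num_le hdesc (anc_parent hTree hTadj.symm h hav hane)
        · exact hbp v u0 ⟨hadj0, hTadj, h, hadj0.ne'⟩
            (anc_num_le hdesc hA) hnvb
    rcases hwitn v with ⟨w2, hw2, nm, hnm, heq⟩ | ⟨-, hnm⟩
    · -- witn v = min nm (lwpt1 w2)
      obtain ⟨⟨u0, hadj0, hequ⟩, -⟩ := hnm
      have h1 : num a ≤ nm := hequ ▸ hnbr u0 hadj0
      have h2 : num a ≤ num (lwpt1 w2) := by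
        obtain ⟨c, hlc, hcb⟩ := leftmost_step hTree hld hA hvb hvne
        obtain ⟨hw2ne, -⟩ := second_child_prop hinj hlc.1 hlc.2 hw2
        have hw2c : num w2 < num c :=
          lt_of_le_of_ne (hlc.2 w2 hw2.1) (fun he => hw2ne (hinj he))
        rcases hlow1 w2 with ⟨hmem, -⟩ | ⟨-, heql⟩
        · obtain ⟨⟨hyl, hylne⟩, x0, hx0, hadjx0⟩ := hmem
          set y0 := lwpt1 w2 with hy0
          have hyx0 : PAnc T r y0 x0 := by
            refine ⟨anc_trans hTree hyl hx0, ?_⟩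
            rintro rfl
            exact hylne (anc_antisymm hTree hyl hx0)
          by_cases hTadj : T.Adj x0 y0
          · by_cases hwx0 : w2 = x0
            · subst hwx0
              have : Anc T r v y0 :=
                anc_parent hTree hTadj.symm hyx0.1 hw2.1.2 hw2.1.1.ne
              exact le_trans hnav.le (anc_num_le hdesc this)
            · have : Anc T r w2 y0 :=
                anc_parent hTree hTadj.symm hyx0.1 hx0 hwx0
              exact absurd (anc_antisymm hTree hyl this) hylne
          · have hbe : IsBackEdge G T r x0 y0 := ⟨hadjx0.symm, hTadj, hyx0⟩
            have hax0 : num a' ≤ num x0 :=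
              le_trans (anc_num_le hdesc hA)
                (le_trans (anc_num_le hdesc hw2.1.2) (anc_num_le hdesc hx0))
            have hx0b : num x0 < num b :=
              lt_of_lt_of_le
                (desc_lt_sibling hTree hinj hdesc hw2.1 hlc.1 hw2c hx0)
                (anc_num_le hdesc (leftmostDesc_anc hTree hcb))
            exact hbp x0 y0 hbe hax0 hx0b
        · rw [heql]
          exact le_trans hnav.le (anc_num_le hdesc hw2.1.2)
      rw [heq]
      exact le_min h1 h2
    · obtain ⟨⟨u0, hadj0, hequ⟩, -⟩ := hnm
      exact hequ ▸ hnbr u0 hadj0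
  · -- witness condition → Stable
    intro hW
    obtain ⟨a', ha', hld⟩ := hpath
    refine ⟨a', ha', hld, fun x y hbe h1 h2 => ?_⟩
    have hax : Anc T r a' x :=
      anc_of_num_between hinj hdesc (leftmostDesc_anc hTree hld) h1 h2.le
    exact back_edge_bound hTree hinj hdesc hlow1
      (fun p j k hj hk hjk => (hsib p j k hj hk hjk).imp id (fun h => ⟨h.1, trivial⟩))
      hwitn ha' hW hld (anc_refl a') x y hbe hax h2
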